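/- For every θ ∈ Θ and N ∈ ℕ, the risk difference with a single additional partially-classified observation satisfies Δ_θ(N, 1) = log(1 + 1/(N + α_S)) − Σ_{j=0}^m G_{N, α_{A_j}}(θ_{A_j}), where the j-th summand uses that X_{A_j} is Binomial(N, θ_{A_j}) distributed. -/

import Mathlib

open Finset

noncomputable section

/-- The finite set of multinomial outcome vectors with total `N`. -/
def counts (k N : ℕ) : Finset (Fin k → ℕ) :=
  (Fintype.piFinset fun _ => Finset.range (N + 1)).filter fun x => ∑ i, x i = N

/-- The multinomial probability mass function with cell probabilities `θ`. -/
def mpmf {k : ℕ} (θ : Fin k → ℝ) (x : Fin k → ℕ) : ℝ :=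
  (Nat.multinomial Finset.univ x : ℝ) * ∏ i, θ i ^ x i

/-- The Kullback–Leibler loss `L(p, θ) = Σ_i θ_i log(θ_i / p_i)`. -/
def KLloss {k : ℕ} (p θ : Fin k → ℝ) : ℝ := ∑ i, θ i * Real.log (θ i / p i)

/-- The Bayes estimator `θ̂` using the fully classified data `x` together with the
partially classified (aggregated) data `y`. -/
def thetaHat {k m : ℕ} (A : Fin (m + 1) → Finset (Fin k)) (α : Fin k → ℝ)
    (N N' : ℕ) (x : Fin k → ℕ) (y : Fin (m + 1) → ℕ) (i : Fin k) : ℝ :=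
  ∑ j, if i ∈ A j then
      ((α i + (x i : ℝ)) / (∑ r ∈ A j, ((x r : ℝ) + α r))) *
        (((y j : ℝ) + ∑ r ∈ A j, ((x r : ℝ) + α r)) / ((N : ℝ) + (N' : ℝ) + ∑ c, α c))
    else 0

/-- The Bayes estimator `θ̃` using only the fully classified data `x`. -/
def thetaTilde {k : ℕ} (α : Fin k → ℝ) (N : ℕ) (x : Fin k → ℕ) (i : Fin k) : ℝ :=
  ((x i : ℝ) + α i) / ((N : ℝ) + ∑ c, α c)

/-- The risk difference `Δ_θ(N, N') = E_θ[L(θ̂, θ)] − E_θ[L(θ̃, θ)]`, the expectation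
being the finite sum over all outcomes `(x, y')` weighted by the multinomial pmfs. -/
def riskDiff {k m : ℕ} (A : Fin (m + 1) → Finset (Fin k)) (α θ : Fin k → ℝ)
    (N N' : ℕ) : ℝ :=
  ∑ x ∈ counts k N, ∑ y' ∈ counts k N',
    mpmf θ x * mpmf θ y' *
      (KLloss (thetaHat A α N N' x fun j => ∑ i ∈ A j, y' i) θ -
        KLloss (thetaTilde α N x) θ)

/-- `G_{N,α̃}(t) = t² E[−log(1 − 1/(1 + B + α̃))]` where `B ~ Binomial(N, t)`. -/
def G (N : ℕ) (a t : ℝ) : ℝ :=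
  t ^ 2 * ∑ x ∈ Finset.range (N + 1),
    (N.choose x : ℝ) * t ^ x * (1 - t) ^ (N - x) *
      (-Real.log (1 - 1 / (1 + (x : ℝ) + a)))


section Helpers

variable {k m : ℕ}

lemma mem_counts {k N : ℕ} {x : Fin k → ℕ} : x ∈ counts k N ↔ ∑ i, x i = N := by
  constructor
  · intro h; exact (Finset.mem_filter.mp h).2
  · intro h
    refine Finset.mem_filter.mpr ⟨Fintype.mem_piFinset.mpr fun i => ?_, h⟩
    exact Finset.mem_range.mpr (Nat.lt_succ_of_le
      (h ▸ Finset.single_le_sum (fun _ _ => Nat.zero_le _) (Finset.mem_univ i)))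

lemma counts_eq_piAntidiag (k N : ℕ) : counts k N = Finset.piAntidiag Finset.univ N := by
  ext x; simp [mem_counts, Finset.mem_piAntidiag]

lemma sum_mpmf {k N : ℕ} (θ : Fin k → ℝ) :
    ∑ x ∈ counts k N, mpmf θ x = (∑ i, θ i) ^ N := by
  rw [counts_eq_piAntidiag, Finset.sum_pow_eq_sum_piAntidiag]
  rfl

end Helpers

lemma multinomial_split {k : ℕ} (A B : Finset (Fin k)) (h : Disjoint A B) (x : Fin k → ℕ) :
    Nat.multinomial (A ∪ B) x =
      ((∑ i ∈ A, x i) + ∑ i ∈ B, x i).choose (∑ i ∈ A, x i) *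
        (Nat.multinomial A x * Nat.multinomial B x) := by
  have hpos : 0 < (∏ i ∈ A, Nat.factorial (x i)) * ∏ i ∈ B, Nat.factorial (x i) := by
    positivity
  apply Nat.eq_of_mul_eq_mul_left hpos
  have h1 := Nat.multinomial_spec (A ∪ B) x
  rw [Finset.prod_union h, Finset.sum_union h] at h1
  have h2 := Nat.multinomial_spec A x
  have h3 := Nat.multinomial_spec B x
  calc ((∏ i ∈ A, Nat.factorial (x i)) * ∏ i ∈ B, Nat.factorial (x i)) *
        Nat.multinomial (A ∪ B) x
      = Nat.factorial ((∑ i ∈ A, x i) + ∑ i ∈ B, x i) := h1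
    _ = ((∑ i ∈ A, x i) + ∑ i ∈ B, x i).choose (∑ i ∈ A, x i) *
          Nat.factorial (∑ i ∈ A, x i) * Nat.factorial (∑ i ∈ B, x i) := by
        rw [Nat.choose_symm_add, Nat.add_choose_mul_factorial_mul_factorial]
    _ = _ := by rw [← h2, ← h3]; ring

lemma fiber_sum {k : ℕ} (A : Finset (Fin k)) (θ : Fin k → ℝ) (N s : ℕ) (hsN : s ≤ N) :
    ∑ x ∈ (counts k N).filter (fun x => ∑ i ∈ A, x i = s), mpmf θ x
      = (N.choose s : ℝ) * ((∑ i ∈ A, θ i) ^ s * (∑ i ∈ Aᶜ, θ i) ^ (N - s)) := by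
  have step : ∑ x ∈ (counts k N).filter (fun x => ∑ i ∈ A, x i = s), mpmf θ x
      = ∑ p ∈ (Finset.piAntidiag A s) ×ˢ (Finset.piAntidiag Aᶜ (N - s)),
          (N.choose s : ℝ) *
            (((Nat.multinomial A p.1 : ℝ) * ∏ r ∈ A, θ r ^ p.1 r) *
             ((Nat.multinomial Aᶜ p.2 : ℝ) * ∏ r ∈ Aᶜ, θ r ^ p.2 r)) := by
    refine Finset.sum_nbij'
      (i := fun x => (fun r => if r ∈ A then x r else 0, fun r => if r ∈ A then 0 else x r))
      (j := fun p => fun r => p.1 r + p.2 r) ?_ ?_ ?_ ?_ ?_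
    · intro x hx
      obtain ⟨hx1, hx2⟩ := Finset.mem_filter.mp hx
      rw [mem_counts] at hx1
      have hAc : ∑ i ∈ Aᶜ, x i = N - s := by
        have := Finset.sum_add_sum_compl A x
        omega
      refine Finset.mem_product.mpr ⟨Finset.mem_piAntidiag.mpr ⟨?_, ?_⟩,
        Finset.mem_piAntidiag.mpr ⟨?_, ?_⟩⟩
      · rw [← hx2]; exact Finset.sum_congr rfl fun r hr => if_pos hr
      · intro r hr; by_contra hrA; simp [hrA] at hr
      · rw [← hAc]; exact Finset.sum_congr rfl fun r hr => if_neg (Finset.mem_compl.mp hr)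
      · intro r hr
        by_contra hrA
        rw [Finset.mem_compl, not_not] at hrA
        simp [hrA] at hr
    · intro p hp
      obtain ⟨hp1, hp2⟩ := Finset.mem_product.mp hp
      obtain ⟨hp11, hp12⟩ := Finset.mem_piAntidiag.mp hp1
      obtain ⟨hp21, hp22⟩ := Finset.mem_piAntidiag.mp hp2
      have hz1 : ∀ r ∉ A, p.1 r = 0 := fun r hr => by
        by_contra h; exact hr (hp12 r h)
      have hz2 : ∀ r ∈ A, p.2 r = 0 := fun r hr => by
        by_contra h; exact (Finset.mem_compl.mp (hp22 r h)) hr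
      have hs1 : ∑ r, p.1 r = s := by
        rw [← hp11]; exact (Finset.sum_subset (Finset.subset_univ A)
          (fun r _ hr => hz1 r hr)).symm
      have hs2 : ∑ r, p.2 r = N - s := by
        rw [← hp21]
        exact (Finset.sum_subset (Finset.subset_univ Aᶜ)
          (fun r _ hr => hz2 r (by simpa using hr))).symm
      refine Finset.mem_filter.mpr ⟨mem_counts.mpr ?_, ?_⟩
      · rw [Finset.sum_add_distrib, hs1, hs2]; omega
      · rw [Finset.sum_add_distrib, hp11, Finset.sum_eq_zero hz2, Nat.add_zero]
    · intro x hx; funext r; by_cases hr : r ∈ A <;> simp [hr]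
    · intro p hp
      obtain ⟨hp1, hp2⟩ := Finset.mem_product.mp hp
      obtain ⟨_, hp12⟩ := Finset.mem_piAntidiag.mp hp1
      obtain ⟨_, hp22⟩ := Finset.mem_piAntidiag.mp hp2
      have hz1 : ∀ r ∉ A, p.1 r = 0 := fun r hr => by
        by_contra h; exact hr (hp12 r h)
      have hz2 : ∀ r ∈ A, p.2 r = 0 := fun r hr => by
        by_contra h; exact (Finset.mem_compl.mp (hp22 r h)) hr
      refine Prod.ext (funext fun r => ?_) (funext fun r => ?_) <;>
        by_cases hr : r ∈ A <;> simp [hr, hz1 r, hz2 r]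
    · intro x hx
      obtain ⟨hx1, hx2⟩ := Finset.mem_filter.mp hx
      rw [mem_counts] at hx1
      have hAc : ∑ i ∈ Aᶜ, x i = N - s := by
        have := Finset.sum_add_sum_compl A x
        omega
      have hmul : Nat.multinomial Finset.univ x
          = N.choose s * (Nat.multinomial A x * Nat.multinomial Aᶜ x) := by
        have := multinomial_split A Aᶜ disjoint_compl_right x
        rw [Finset.union_compl] at this
        rw [this, hx2, hAc, Nat.add_sub_cancel' hsN]
      have hprod : (∏ i, θ i ^ x i)
          = (∏ r ∈ A, θ r ^ x r) * ∏ r ∈ Aᶜ, θ r ^ x r :=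
        (Finset.prod_mul_prod_compl A _).symm
      have hm1 : Nat.multinomial A x
          = Nat.multinomial A (fun r => if r ∈ A then x r else 0) :=
        Nat.multinomial_congr fun r hr => (if_pos hr).symm
      have hm2 : Nat.multinomial Aᶜ x
          = Nat.multinomial Aᶜ (fun r => if r ∈ A then 0 else x r) :=
        Nat.multinomial_congr fun r hr => (if_neg (Finset.mem_compl.mp hr)).symm
      have hq1 : (∏ r ∈ A, θ r ^ x r)
          = ∏ r ∈ A, θ r ^ (if r ∈ A then x r else 0) :=
        Finset.prod_congr rfl fun r hr => by rw [if_pos hr]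
      have hq2 : (∏ r ∈ Aᶜ, θ r ^ x r)
          = ∏ r ∈ Aᶜ, θ r ^ (if r ∈ A then 0 else x r) :=
        Finset.prod_congr rfl fun r hr => by rw [if_neg (Finset.mem_compl.mp hr)]
      rw [mpmf, hmul, hprod, hm1, hm2, hq1, hq2]
      push_cast
      ring
  rw [step, Finset.sum_product, Finset.sum_pow_eq_sum_piAntidiag A θ s,
    Finset.sum_pow_eq_sum_piAntidiag Aᶜ θ (N - s), Finset.sum_mul_sum, Finset.mul_sum]
  refine Finset.sum_congr rfl fun a _ => ?_
  rw [Finset.mul_sum]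

lemma agg {k : ℕ} (A : Finset (Fin k)) (θ : Fin k → ℝ) (N : ℕ) (g : ℕ → ℝ) :
    ∑ x ∈ counts k N, mpmf θ x * g (∑ i ∈ A, x i) =
      ∑ s ∈ Finset.range (N + 1),
        (N.choose s : ℝ) * (∑ i ∈ A, θ i) ^ s * (∑ i ∈ Aᶜ, θ i) ^ (N - s) * g s := by
  have hmaps : ∀ x ∈ counts k N, (∑ i ∈ A, x i) ∈ Finset.range (N + 1) := fun x hx => by
    rw [mem_counts] at hx
    exact Finset.mem_range.mpr (Nat.lt_succ_of_le
      (hx ▸ Finset.sum_le_sum_of_subset (Finset.subset_univ A)))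
  rw [← Finset.sum_fiberwise_of_maps_to hmaps (fun x => mpmf θ x * g (∑ i ∈ A, x i))]
  refine Finset.sum_congr rfl fun s hs => ?_
  have hsN : s ≤ N := Nat.lt_succ_iff.mp (Finset.mem_range.mp hs)
  have h1 : ∑ x ∈ (counts k N).filter (fun x => ∑ i ∈ A, x i = s),
      mpmf θ x * g (∑ i ∈ A, x i)
      = ∑ x ∈ (counts k N).filter (fun x => ∑ i ∈ A, x i = s), mpmf θ x * g s :=
    Finset.sum_congr rfl fun x hx => by rw [(Finset.mem_filter.mp hx).2]
  rw [h1, ← Finset.sum_mul, fiber_sum A θ N s hsN]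
  ring

lemma counts_one (k : ℕ) :
    counts k 1 = Finset.univ.image (fun i : Fin k => (Pi.single i 1 : Fin k → ℕ)) := by
  ext y
  simp only [mem_counts, Finset.mem_image, Finset.mem_univ, true_and]
  constructor
  · intro hy
    have hex : ∃ i, y i ≠ 0 := by
      by_contra h
      push_neg at h
      simp [h] at hy
    obtain ⟨i, hi⟩ := hex
    refine ⟨i, funext fun r => ?_⟩
    have h1 : y i = 1 := le_antisymm
      (hy ▸ Finset.single_le_sum (fun _ _ => Nat.zero_le _) (Finset.mem_univ i))
      (Nat.one_le_iff_ne_zero.mpr hi)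
    rcases eq_or_ne r i with h | h
    · rw [h, h1, Pi.single_eq_same]
    · have hpair : y i + y r ≤ 1 := by
        have h2 := Finset.sum_le_sum_of_subset (f := y)
          (Finset.subset_univ ({i, r} : Finset (Fin k)))
        rw [Finset.sum_pair (Ne.symm h), hy] at h2
        exact h2
      have : y r = 0 := by omega
      rw [Pi.single_eq_of_ne h, this]
  · rintro ⟨i, rfl⟩
    simp [Pi.single_apply]

lemma mpmf_single {k : ℕ} (θ : Fin k → ℝ) (i : Fin k) :
    mpmf θ (Pi.single i 1) = θ i := by
  have hs : ∑ r, (Pi.single i 1 : Fin k → ℕ) r = 1 := by simp [Pi.single_apply]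
  have hf : ∏ r, Nat.factorial ((Pi.single i 1 : Fin k → ℕ) r) = 1 :=
    Finset.prod_eq_one fun r _ => by
      rcases eq_or_ne r i with h | h <;> simp [Pi.single_apply, h]
  have hspec := Nat.multinomial_spec Finset.univ (Pi.single i 1 : Fin k → ℕ)
  rw [hf, one_mul, hs] at hspec
  have hprod : (∏ r, θ r ^ (Pi.single i 1 : Fin k → ℕ) r) = θ i := by
    rw [Finset.prod_eq_single i (fun r _ hr => by simp [Pi.single_eq_of_ne hr])
      (fun h => absurd (Finset.mem_univ i) h)]
    simp
  rw [mpmf, hspec, hprod]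
  norm_num

lemma thetaHat_apply {k m : ℕ} (A : Fin (m + 1) → Finset (Fin k))
    (hAdisj : ∀ j j', j ≠ j' → Disjoint (A j) (A j'))
    (α : Fin k → ℝ) (N N' : ℕ) (x : Fin k → ℕ) (y : Fin (m + 1) → ℕ)
    {i : Fin k} {j0 : Fin (m + 1)} (hij : i ∈ A j0) :
    thetaHat A α N N' x y i =
      ((α i + (x i : ℝ)) / (∑ r ∈ A j0, ((x r : ℝ) + α r))) *
        (((y j0 : ℝ) + ∑ r ∈ A j0, ((x r : ℝ) + α r)) /
          ((N : ℝ) + (N' : ℝ) + ∑ c, α c)) := by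
  rw [thetaHat, Finset.sum_eq_single_of_mem j0 (Finset.mem_univ _) ?_, if_pos hij]
  intro b _ hb
  rw [if_neg]
  exact fun hib => (Finset.disjoint_left.mp (hAdisj b j0 hb)) hib hij

lemma pointwise {k m : ℕ} (A : Fin (m + 1) → Finset (Fin k))
    (hAne : ∀ j, (A j).Nonempty)
    (hAdisj : ∀ j j', j ≠ j' → Disjoint (A j) (A j'))
    (hAcover : ∀ i, ∃ j, i ∈ A j)
    (α : Fin k → ℝ) (hα : ∀ i, 0 < α i)
    (θ : Fin k → ℝ) (hθ : ∀ i, 0 < θ i) (hθsum : ∑ i, θ i = 1)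
    (N : ℕ) (x : Fin k → ℕ) (i0 : Fin k) (j0 : Fin (m + 1)) (hi0 : i0 ∈ A j0) :
    KLloss (thetaHat A α N 1 x (fun j => if i0 ∈ A j then 1 else 0)) θ -
        KLloss (thetaTilde α N x) θ
      = Real.log (1 + 1 / ((N : ℝ) + ∑ c, α c)) +
          (∑ i ∈ A j0, θ i) *
            Real.log (1 - 1 / (1 + ∑ i ∈ A j0, ((x i : ℝ) + α i))) := by
  set αS := ∑ c, α c with hαSdef
  have hαS : 0 < αS := Finset.sum_pos (fun i _ => hα i) ⟨i0, Finset.mem_univ i0⟩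
  set S : Fin (m + 1) → ℝ := fun j => ∑ r ∈ A j, ((x r : ℝ) + α r) with hSdef
  have hS : ∀ j, 0 < S j := fun j =>
    Finset.sum_pos (fun r _ => by have := hα r; positivity) (hAne j)
  have hNα : (0:ℝ) < (N : ℝ) + αS := by positivity
  have hN1α : (0:ℝ) < (N : ℝ) + 1 + αS := by positivity
  set C := Real.log ((N : ℝ) + 1 + αS) - Real.log ((N : ℝ) + αS) with hC
  have key : ∀ i : Fin k,
      θ i * Real.log (θ i / thetaHat A α N 1 x (fun j => if i0 ∈ A j then 1 else 0) i)
        - θ i * Real.log (θ i / thetaTilde α N x i)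
      = θ i * (C + if i ∈ A j0 then Real.log (S j0) - Real.log (1 + S j0) else 0) := by
    intro i
    have hxα : (0:ℝ) < (x i : ℝ) + α i := by have := hα i; positivity
    have hαx : (0:ℝ) < α i + (x i : ℝ) := by linarith
    obtain ⟨j, hj⟩ := hAcover i
    have hiff : (i0 ∈ A j) ↔ (j = j0) := by
      constructor
      · intro h
        by_contra hne
        exact Finset.disjoint_left.mp (hAdisj j j0 hne) h hi0
      · intro h; exact h ▸ hi0
    have hHat : thetaHat A α N 1 x (fun j => if i0 ∈ A j then 1 else 0) i
        = ((α i + (x i : ℝ)) / S j) *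
          (((if j = j0 then (1:ℝ) else 0) + S j) / ((N : ℝ) + 1 + αS)) := by
      rw [thetaHat_apply A hAdisj α N 1 x _ hj]
      push_cast
      rw [if_congr hiff rfl rfl]
    have hY : (0:ℝ) < (if j = j0 then (1:ℝ) else 0) + S j := by
      have := hS j; split_ifs <;> linarith
    have hp : (0:ℝ) < ((α i + (x i : ℝ)) / S j) *
        (((if j = j0 then (1:ℝ) else 0) + S j) / ((N : ℝ) + 1 + αS)) :=
      mul_pos (div_pos hαx (hS j)) (div_pos hY hN1α)
    have hq : (0:ℝ) < thetaTilde α N x i := div_pos hxα hNα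
    rw [← mul_sub]
    congr 1
    rw [hHat, thetaTilde, ← hαSdef]
    rw [Real.log_div (ne_of_gt (hθ i)) (ne_of_gt hp),
      Real.log_div (ne_of_gt (hθ i)) (ne_of_gt (div_pos hxα hNα)),
      Real.log_mul (ne_of_gt (div_pos hαx (hS j))) (ne_of_gt (div_pos hY hN1α)),
      Real.log_div (ne_of_gt hαx) (ne_of_gt (hS j)),
      Real.log_div (ne_of_gt hY) (ne_of_gt hN1α),
      Real.log_div (ne_of_gt hxα) (ne_of_gt hNα)]
    rcases eq_or_ne j j0 with hjj | hjj
    · subst hjj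
      rw [if_pos rfl, if_pos hj, add_comm (α i) ((x i : ℝ)), hC]
      ring
    · have hiA : i ∉ A j0 := fun h =>
        Finset.disjoint_left.mp (hAdisj j j0 hjj) hj h
      rw [if_neg hjj, if_neg hiA, zero_add, add_comm (α i) ((x i : ℝ)), hC]
      ring
  rw [KLloss, KLloss, ← Finset.sum_sub_distrib, Finset.sum_congr rfl fun i _ => key i]
  simp_rw [mul_add, mul_ite, mul_zero]
  rw [Finset.sum_add_distrib, ← Finset.sum_mul, hθsum, one_mul,
    Finset.sum_ite_mem, Finset.univ_inter, ← Finset.sum_mul]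
  have e1 : C = Real.log (1 + 1 / ((N : ℝ) + αS)) := by
    rw [hC, ← Real.log_div (ne_of_gt hN1α) (ne_of_gt hNα)]
    congr 1
    field_simp
    ring
  have e2 : Real.log (S j0) - Real.log (1 + S j0)
      = Real.log (1 - 1 / (1 + S j0)) := by
    rw [← Real.log_div (ne_of_gt (hS j0)) (ne_of_gt (by linarith [hS j0] : (0:ℝ) < 1 + S j0))]
    congr 1
    have h := hS j0
    field_simp
    ring
  rw [e1, e2]

/-- The risk difference with one additional partially classified observation:
`Δ_θ(N, 1) = log(1 + 1/(N + α_S)) − Σ_j G_{N, α_{A_j}}(θ_{A_j})`. -/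
theorem risk_difference_one_obs {k m : ℕ} (hk : 2 ≤ k)
    (A : Fin (m + 1) → Finset (Fin k))
    (hAne : ∀ j, (A j).Nonempty)
    (hAdisj : ∀ j j', j ≠ j' → Disjoint (A j) (A j'))
    (hAcover : ∀ i, ∃ j, i ∈ A j)
    (α : Fin k → ℝ) (hα : ∀ i, 0 < α i)
    (θ : Fin k → ℝ) (hθ : ∀ i, 0 < θ i) (hθsum : ∑ i, θ i = 1)
    (N : ℕ) :
    riskDiff A α θ N 1 =
      Real.log (1 + 1 / ((N : ℝ) + ∑ c, α c)) -
        ∑ j, G N (∑ i ∈ A j, α i) (∑ i ∈ A j, θ i) := by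
  classical
  have hpd : ((Finset.univ : Finset (Fin (m + 1))) : Set (Fin (m + 1))).PairwiseDisjoint A :=
    fun j _ j' _ hne => hAdisj j j' hne
  have huniv : (Finset.univ : Finset (Fin k)) = Finset.univ.biUnion A := by
    ext i
    simp only [Finset.mem_biUnion, Finset.mem_univ, true_iff, iff_true]
    obtain ⟨j, hj⟩ := hAcover i
    exact ⟨j, trivial, hj⟩
  have hsplit : ∀ f : Fin k → ℝ, ∑ i, f i = ∑ j, ∑ i ∈ A j, f i := fun f => by
    conv_lhs => rw [huniv]
    exact Finset.sum_biUnion hpd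
  have hθA1 : ∑ j, ∑ i ∈ A j, θ i = 1 := by rw [← hsplit θ, hθsum]
  have hyfun : ∀ i0 : Fin k, (fun j => ∑ i ∈ A j, (Pi.single i0 1 : Fin k → ℕ) i)
      = fun j => if i0 ∈ A j then 1 else 0 := fun i0 => funext fun j => by
    simp [Pi.single_apply]
  have hinj : ∀ a ∈ (Finset.univ : Finset (Fin k)), ∀ b ∈ Finset.univ,
      (fun i : Fin k => (Pi.single i 1 : Fin k → ℕ)) a
        = (fun i : Fin k => (Pi.single i 1 : Fin k → ℕ)) b → a = b := by
    intro a _ b _ h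
    by_contra hne
    have h2 : (Pi.single a 1 : Fin k → ℕ) a = (Pi.single b 1 : Fin k → ℕ) a := congrFun h a
    rw [Pi.single_eq_same, Pi.single_eq_of_ne hne] at h2
    exact one_ne_zero h2
  have step1 : riskDiff A α θ N 1
      = ∑ x ∈ counts k N, mpmf θ x *
          (Real.log (1 + 1 / ((N : ℝ) + ∑ c, α c)) +
            ∑ j, (∑ i ∈ A j, θ i) ^ 2 *
              Real.log (1 - 1 / (1 + ∑ i ∈ A j, ((x i : ℝ) + α i)))) := by
    rw [riskDiff]
    refine Finset.sum_congr rfl fun x hx => ?_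
    rw [counts_one, Finset.sum_image hinj]
    have e0 : ∀ i0 : Fin k,
        mpmf θ x * mpmf θ (Pi.single i0 1) *
          (KLloss (thetaHat A α N 1 x fun j => ∑ i ∈ A j, (Pi.single i0 1 : Fin k → ℕ) i) θ -
            KLloss (thetaTilde α N x) θ)
        = mpmf θ x * (θ i0 *
            (KLloss (thetaHat A α N 1 x fun j => if i0 ∈ A j then 1 else 0) θ -
              KLloss (thetaTilde α N x) θ)) := fun i0 => by
      rw [mpmf_single, hyfun i0]; ring
    rw [Finset.sum_congr rfl fun i0 _ => e0 i0, hsplit]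
    have e1 : ∀ j : Fin (m + 1), ∑ i0 ∈ A j, mpmf θ x * (θ i0 *
        (KLloss (thetaHat A α N 1 x fun j' => if i0 ∈ A j' then 1 else 0) θ -
          KLloss (thetaTilde α N x) θ))
        = mpmf θ x * ((∑ i ∈ A j, θ i) *
            (Real.log (1 + 1 / ((N : ℝ) + ∑ c, α c)) +
              (∑ i ∈ A j, θ i) *
                Real.log (1 - 1 / (1 + ∑ i ∈ A j, ((x i : ℝ) + α i))))) := by
      intro j
      have e2 : ∀ i0 ∈ A j, mpmf θ x * (θ i0 *
          (KLloss (thetaHat A α N 1 x fun j' => if i0 ∈ A j' then 1 else 0) θ -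
            KLloss (thetaTilde α N x) θ))
          = mpmf θ x * (θ i0 *
              (Real.log (1 + 1 / ((N : ℝ) + ∑ c, α c)) +
                (∑ i ∈ A j, θ i) *
                  Real.log (1 - 1 / (1 + ∑ i ∈ A j, ((x i : ℝ) + α i))))) := fun i0 hi0 => by
        rw [pointwise A hAne hAdisj hAcover α hα θ hθ hθsum N x i0 j hi0]
      rw [Finset.sum_congr rfl e2, ← Finset.mul_sum, ← Finset.sum_mul]
    rw [Finset.sum_congr rfl fun j _ => e1 j, ← Finset.mul_sum]
    congr 1
    have e3 : ∀ j : Fin (m + 1), (∑ i ∈ A j, θ i) *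
        (Real.log (1 + 1 / ((N : ℝ) + ∑ c, α c)) +
          (∑ i ∈ A j, θ i) *
            Real.log (1 - 1 / (1 + ∑ i ∈ A j, ((x i : ℝ) + α i))))
        = (∑ i ∈ A j, θ i) * Real.log (1 + 1 / ((N : ℝ) + ∑ c, α c)) +
            (∑ i ∈ A j, θ i) ^ 2 *
              Real.log (1 - 1 / (1 + ∑ i ∈ A j, ((x i : ℝ) + α i))) := fun j => by ring
    rw [Finset.sum_congr rfl fun j _ => e3 j, Finset.sum_add_distrib, ← Finset.sum_mul,
      hθA1, one_mul]
  rw [step1]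
  simp_rw [mul_add]
  rw [Finset.sum_add_distrib]
  have t1 : ∑ x ∈ counts k N, mpmf θ x * Real.log (1 + 1 / ((N : ℝ) + ∑ c, α c))
      = Real.log (1 + 1 / ((N : ℝ) + ∑ c, α c)) := by
    rw [← Finset.sum_mul, sum_mpmf, hθsum, one_pow, one_mul]
  have t2 : ∑ x ∈ counts k N, mpmf θ x * (∑ j, (∑ i ∈ A j, θ i) ^ 2 *
        Real.log (1 - 1 / (1 + ∑ i ∈ A j, ((x i : ℝ) + α i))))
      = ∑ j, -(G N (∑ i ∈ A j, α i) (∑ i ∈ A j, θ i)) := by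
    simp_rw [Finset.mul_sum]
    rw [Finset.sum_comm]
    refine Finset.sum_congr rfl fun j _ => ?_
    have e4 : ∀ x : Fin k → ℕ, mpmf θ x * ((∑ i ∈ A j, θ i) ^ 2 *
          Real.log (1 - 1 / (1 + ∑ i ∈ A j, ((x i : ℝ) + α i))))
        = (∑ i ∈ A j, θ i) ^ 2 * (mpmf θ x *
            Real.log (1 - 1 / (1 + ((∑ i ∈ A j, x i : ℕ) : ℝ) + ∑ i ∈ A j, α i))) := fun x => by
      have hcast : (1 : ℝ) + ∑ i ∈ A j, ((x i : ℝ) + α i)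
          = 1 + ((∑ i ∈ A j, x i : ℕ) : ℝ) + ∑ i ∈ A j, α i := by
        push_cast
        rw [Finset.sum_add_distrib]
        ring
      rw [hcast]; ring
    rw [Finset.sum_congr rfl fun x _ => e4 x, ← Finset.mul_sum]
    have hcompl : ∑ i ∈ (A j)ᶜ, θ i = 1 - ∑ i ∈ A j, θ i := by
      have h := Finset.sum_add_sum_compl (A j) θ
      rw [hθsum] at h
      linarith
    have hagg : ∑ x ∈ counts k N, mpmf θ x *
          Real.log (1 - 1 / (1 + ((∑ i ∈ A j, x i : ℕ) : ℝ) + ∑ i ∈ A j, α i))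
        = ∑ s ∈ Finset.range (N + 1), (N.choose s : ℝ) * (∑ i ∈ A j, θ i) ^ s *
            (∑ i ∈ (A j)ᶜ, θ i) ^ (N - s) *
            Real.log (1 - 1 / (1 + (s : ℝ) + ∑ i ∈ A j, α i)) :=
      agg (A j) θ N (fun s => Real.log (1 - 1 / (1 + (s : ℝ) + ∑ i ∈ A j, α i)))
    rw [hagg, hcompl, G]
    simp only [mul_neg, Finset.sum_neg_distrib, neg_neg]
  rw [t1, t2, Finset.sum_neg_distrib]
  ring
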